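/- For every complex number s with real part greater than 1, the Cesàro means (1/N) ∑_{m=1}^{N} ∏_{p prime, p ∣ m} (1 − 1/p^{s-1}) converge, as N → ∞, to 1/ζ(s), where ζ is the Riemann zeta function. -/

import Mathlib

/-!
For `m ≠ 0`, `∏_{p ∣ m} (1 - p^{1-s}) = ∑_{d ∣ m} μ(d) d^{1-s} = (g * 1)(m)` with
`g(d) = μ(d) d^{1-s}`. Summing over `m ≤ N` gives `∑_{d ≤ N} g(d) ⌊N/d⌋`, so the Cesàro mean is
`∑_d g(d) ⌊N/d⌋/N`. Since `⌊N/d⌋/N ≤ 1/d` and `∑_d |g(d)|/d = ∑_d d^{-Re s} < ∞`, dominated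
convergence gives the limit `∑_d g(d)/d = ∑_d μ(d)/d^s = 1/ζ(s)`.
-/

open Filter Finset

open scoped ArithmeticFunction.Moebius ArithmeticFunction.zeta LSeries.notation Topology

theorem Nat.squarefree_prod_primeFactors (n : ℕ) : Squarefree (∏ p ∈ n.primeFactors, p) :=
  Finset.squarefree_prod_of_pairwise_isCoprime
    (fun _ hp _ hq hpq ↦ Nat.coprime_iff_isRelPrime.mp <|
      (Nat.coprime_primes (Nat.prime_of_mem_primeFactors hp)
        (Nat.prime_of_mem_primeFactors hq)).mpr hpq)
    fun _ hp ↦ (Nat.prime_of_mem_primeFactors hp).squarefree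

theorem tendsto_natDiv_div_atTop (d : ℕ) :
    Tendsto (fun N : ℕ ↦ ((N / d : ℕ) : ℝ) / N) atTop (𝓝 (d : ℝ)⁻¹) := by
  have h := (tendsto_nat_floor_mul_div_atTop (a := (d : ℝ)⁻¹) (by positivity)).comp
    tendsto_natCast_atTop_atTop
  refine h.congr fun N ↦ ?_
  rw [Function.comp_apply, inv_mul_eq_div, Nat.floor_div_natCast, Nat.floor_natCast]

theorem natDiv_div_le_inv (N d : ℕ) : ((N / d : ℕ) : ℝ) / N ≤ (d : ℝ)⁻¹ := by
  rcases N.eq_zero_or_pos with rfl | hN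
  · simp
  rw [div_le_iff₀ (by exact_mod_cast hN), inv_mul_eq_div]
  exact Nat.cast_div_le

namespace ArithmeticFunction

theorem IsMultiplicative.prodPrimeFactors_one_sub {R : Type*} [CommRing R]
    {f : ArithmeticFunction R} (hf : f.IsMultiplicative) {n : ℕ} (hn : n ≠ 0) :
    ∏ p ∈ n.primeFactors, (1 - f p) = ∑ d ∈ n.divisors, μ d * f d := by
  set r := ∏ p ∈ n.primeFactors, p
  have hr : r ≠ 0 := (Nat.squarefree_prod_primeFactors n).ne_zero
  rw [← Nat.primeFactors_prod_primeFactors n,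
    hf.prodPrimeFactors_one_sub_of_squarefree f (Nat.squarefree_prod_primeFactors n)]
  refine sum_subset (Nat.divisors_subset_of_dvd hn (Nat.prod_primeFactors_dvd n))
    fun d hdn hdr ↦ ?_
  -- a squarefree divisor of `n` divides the radical of `n`
  have hd : ¬Squarefree d := fun hd ↦ hdr <| Nat.mem_divisors.mpr ⟨by
    rw [← Nat.prod_primeFactors_of_squarefree hd, Nat.prod_primeFactors_dvd_iff hr,
      Nat.primeFactors_prod_primeFactors]
    exact Nat.primeFactors_mono (Nat.dvd_of_mem_divisors hdn) hn, hr⟩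
  simp [moebius_eq_zero_of_not_squarefree hd]

noncomputable def invCpow (w : ℂ) : ArithmeticFunction ℂ :=
  ⟨fun n ↦ if n = 0 then 0 else ((n : ℂ) ^ w)⁻¹, if_pos rfl⟩

theorem invCpow_apply {w : ℂ} {n : ℕ} (hn : n ≠ 0) : invCpow w n = ((n : ℂ) ^ w)⁻¹ :=
  if_neg hn

theorem isMultiplicative_invCpow (w : ℂ) : (invCpow w).IsMultiplicative := by
  refine IsMultiplicative.iff_ne_zero.mpr ⟨by simp [invCpow_apply], fun {m n} hm hn _ ↦ ?_⟩
  rw [invCpow_apply (mul_ne_zero hm hn), invCpow_apply hm, invCpow_apply hn, Nat.cast_mul,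
    Complex.natCast_mul_natCast_cpow, mul_inv]

theorem term_pmul_invCpow (f : ArithmeticFunction ℂ) (w z : ℂ) :
    LSeries.term (f.pmul (invCpow w)) z = LSeries.term f (w + z) := by
  ext n
  rcases eq_or_ne n 0 with rfl | hn
  · simp
  rw [LSeries.term_of_ne_zero hn, LSeries.term_of_ne_zero hn, pmul_apply, invCpow_apply hn,
    Complex.cpow_add _ _ (Nat.cast_ne_zero.mpr hn)]
  ring


theorem tendsto_mean_mul_zeta {g : ArithmeticFunction ℂ} (hg : LSeriesSummable g 1) :
    Tendsto (fun N : ℕ ↦ (1 / (N : ℂ)) * ∑ n ∈ Ioc 0 N, (g * ↑ζ) n) atTop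
      (𝓝 (LSeries g 1)) := by
  have hmean (N : ℕ) : (1 / (N : ℂ)) * ∑ n ∈ Ioc 0 N, (g * ↑ζ) n =
      ∑' d, g d * ((((N / d : ℕ) : ℝ) / N : ℝ) : ℂ) := by
    rw [sum_Ioc_mul_zeta_eq_sum, mul_sum, tsum_eq_sum (s := Ioc 0 N)]
    · refine sum_congr rfl fun d _ ↦ ?_
      push_cast
      ring
    · intro d hd
      have hNd : N / d = 0 := by
        rcases Nat.eq_zero_or_pos d with rfl | hd0
        · exact N.div_zero
        · exact Nat.div_eq_of_lt (by simpa [hd0] using hd)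
      simp [hNd]
  have hterm (d : ℕ) : LSeries.term g 1 d = g d * (((d : ℝ)⁻¹ : ℝ) : ℂ) := by
    rcases eq_or_ne d 0 with rfl | hd
    · simp
    rw [LSeries.term_of_ne_zero hd, Complex.cpow_one, div_eq_mul_inv]
    push_cast
    rfl
  simp_rw [hmean]
  refine tendsto_tsum_of_dominated_convergence hg.norm (fun d ↦ ?_) (.of_forall fun N d ↦ ?_)
  · rw [hterm]
    exact tendsto_const_nhds.mul
      ((Complex.continuous_ofReal.tendsto _).comp (tendsto_natDiv_div_atTop d))
  · rw [hterm, norm_mul, norm_mul, Complex.norm_real, Complex.norm_real,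
      Real.norm_of_nonneg (by positivity), Real.norm_of_nonneg (by positivity)]
    exact mul_le_mul_of_nonneg_left (natDiv_div_le_inv N d) (norm_nonneg _)

theorem prod_primeFactors_one_sub_one_div_cpow (w : ℂ) {m : ℕ} (hm : m ≠ 0) :
    ∏ p ∈ m.primeFactors, (1 - 1 / (p : ℂ) ^ w) =
      ((μ : ArithmeticFunction ℂ).pmul (invCpow w) * ↑ζ) m := by
  simp_rw [coe_mul_zeta_apply, pmul_apply, intCoe_apply,
    ← (isMultiplicative_invCpow w).prodPrimeFactors_one_sub hm]
  refine prod_congr rfl fun p hp ↦ ?_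
  rw [invCpow_apply (Nat.prime_of_mem_primeFactors hp).ne_zero, one_div]

theorem term_moebius_pmul_invCpow (s : ℂ) :
    LSeries.term ((μ : ArithmeticFunction ℂ).pmul (invCpow (s - 1))) 1 =
      LSeries.term ↗μ s := by
  rw [term_pmul_invCpow, sub_add_cancel]
  rfl

theorem LSeries_moebius_eq_one_div_riemannZeta {s : ℂ} (hs : 1 < s.re) :
    L ↗μ s = 1 / riemannZeta s :=
  eq_one_div_of_mul_eq_one_right <|
    LSeries_zeta_eq_riemannZeta hs ▸ LSeries_zeta_mul_Lseries_moebius hs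

end ArithmeticFunction

open ArithmeticFunction in
theorem cesaro_euler_like_minus_complex (s : ℂ) (hs : 1 < s.re) :
    Tendsto (fun N : ℕ =>
        (1 / (N : ℂ)) * ∑ m ∈ Finset.Icc 1 N,
          ∏ p ∈ m.primeFactors, (1 - 1 / (p : ℂ) ^ (s - 1)))
      atTop (nhds (1 / riemannZeta s)) := by
  set g : ArithmeticFunction ℂ := (μ : ArithmeticFunction ℂ).pmul (invCpow (s - 1))
  have hterm : LSeries.term g 1 = LSeries.term ↗μ s := term_moebius_pmul_invCpow s
  have hsummable : LSeriesSummable g 1 := by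
    rw [LSeriesSummable, hterm]
    exact LSeriesSummable_moebius_iff.mpr hs
  have hL : LSeries g 1 = 1 / riemannZeta s := by
    rw [LSeries, hterm]
    exact LSeries_moebius_eq_one_div_riemannZeta hs
  rw [← hL]
  refine (tendsto_mean_mul_zeta hsummable).congr fun N ↦ ?_
  rw [← Icc_add_one_left_eq_Ioc, zero_add]
  refine congrArg _ (sum_congr rfl fun m hm ↦ ?_)
  exact (prod_primeFactors_one_sub_one_div_cpow _
    (Nat.one_le_iff_ne_zero.mp (mem_Icc.mp hm).1)).symm
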